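/- Let π: (M,D) → (M̄, D̄) be an affine submersion with horizontal distribution H, where D is flat along fibers in the sense that R^D_{E,F}G = 0 whenever one of E,F,G is vertical, the fundamental tensor T^D vanishes, and the fundamental tensor A^D satisfies A^D_{X̃}Ỹ = ā(X,Y)ξ - ā_{J̄}(X,Y)Jξ for a (0,2)-tensor ā on M̄, where ξ, Jξ span the vertical distribution and D̄J̄ = 0. If moreover R^D = -(1/4)[A,A] with A = ∇J and the horizontal part of A decomposes as B_{X̃}Ỹ = (B̄_X Y)~ + c̄(X,Y)ξ + c̄_{J̄}(X,Y)Jξ, then the vertical component of R^D_{X̃,Ỹ}Z̃ yields (d^{D̄} ā)(X,Y,Z) = -(1/4)(c̄(X, B̄_Y Z) - c̄(Y, B̄_X Z)) for all X,Y,Z ∈ TM̄. -/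
import Mathlib


/-! Statement 9 (Lemma bar_c of the paper): for the affine submersion `π : (M,D) → (M̄,D̄)`
arising from a conical special complex manifold, the vertical component of
`R^D_{X̃,Ỹ}Z̃` together with `R^D = -(1/4)[A,A] = -(1/4)[B,B]` and the decomposition of `B`
yields `(d^{D̄} ā)(X,Y,Z) = -(1/4)(c̄(X, B̄_Y Z) - c̄(Y, B̄_X Z))`. -/

section
variable {C : Type*} [CommRing C] [Algebra ℝ C]
variable {V : Type*} [LieRing V] [LieAlgebra ℝ V] [Module C V]
  [SMulCommClass ℝ C V] [IsScalarTower ℝ C V]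
variable {Vb : Type*} [AddCommGroup Vb] [Module ℝ Vb]

/-- Curvature of a connection on vector fields. -/
def curvOf (D : V → V → V) (X Y Z : V) : V := D X (D Y Z) - D Y (D X Z) - D ⁅X, Y⁆ Z

/-- Exterior covariant derivative `(d^{D̄} k)(X,Y,Z)` of a function-valued (0,2)-tensor `k`
with respect to the connection `Db` on the base, `act` being the action of base vector
fields on functions. -/
def dbar (act : Vb → C → C) (Db : Vb → Vb → Vb) (k : Vb → Vb → C) (X Y Z : Vb) : C :=
  (act X (k Y Z) - k (Db X Y) Z - k Y (Db X Z))
    - (act Y (k X Z) - k (Db Y X) Z - k X (Db Y Z))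

theorem vertical_curvature_component
    (D : V → V → V) (Db : Vb → Vb → Vb) (Jb : Vb → Vb)
    (lift : Vb → V) (vproj : V →ₗ[C] V) (xi Jxi : V)
    (act : Vb → C → C)
    (abar cbar : Vb → Vb → C) (Bbar : Vb → Vb → Vb) (B : V → V → V)
    -- fundamental equation of the affine submersion (vertical component of curvature):
    (hfund : ∀ X Y Z : Vb, vproj (curvOf D (lift X) (lift Y) (lift Z)) =
        dbar act Db abar X Y Z • xi - dbar act Db (fun X Y => abar X (Jb Y)) X Y Z • Jxi)
    -- flatness of ∇ in the form R^D = -(1/4)[B,B] on horizontal lifts: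
    (hR : ∀ X Y Z : Vb, curvOf D (lift X) (lift Y) (lift Z) =
        -((1/4 : ℝ) • (B (lift X) (B (lift Y) (lift Z)) - B (lift Y) (B (lift X) (lift Z)))))
    -- decomposition of the horizontal part of A:
    (hB : ∀ X Y : Vb, B (lift X) (lift Y) =
        lift (Bbar X Y) + cbar X Y • xi + cbar X (Jb Y) • Jxi)
    (hBadd : ∀ (u v w : V), B u (v + w) = B u v + B u w)
    (hBsmul : ∀ (u : V) (a : C) (v : V), B u (a • v) = a • B u v)
    (hBxi : ∀ X : Vb, B (lift X) xi = 0)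
    (hBJxi : ∀ X : Vb, B (lift X) Jxi = 0)
    -- vproj is the projection onto the vertical distribution:
    (hvlift : ∀ X : Vb, vproj (lift X) = 0)
    (hvxi : vproj xi = xi) (hvJxi : vproj Jxi = Jxi)
    -- ξ, Jξ span the vertical distribution freely over functions:
    (hindep : ∀ a b : C, a • xi + b • Jxi = 0 → a = 0 ∧ b = 0) :
    ∀ X Y Z : Vb, dbar act Db abar X Y Z =
      -((1/4 : ℝ) • (cbar X (Bbar Y Z) - cbar Y (Bbar X Z))) := by

  intro X Y Z
  have hBB : ∀ X Y Z : Vb, B (lift X) (B (lift Y) (lift Z)) =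
      lift (Bbar X (Bbar Y Z)) + cbar X (Bbar Y Z) • xi + cbar X (Jb (Bbar Y Z)) • Jxi := by
    intro X Y Z
    rw [hB Y Z, hBadd, hBadd, hBsmul, hBsmul, hBxi, hBJxi, smul_zero, smul_zero,
      add_zero, add_zero, hB X (Bbar Y Z)]
  have h1 := hfund X Y Z
  rw [hR X Y Z, hBB X Y Z, hBB Y X Z] at h1
  set r4 : C := algebraMap ℝ C (1/4) with hr4
  have hsmV : ∀ v : V, (1/4 : ℝ) • v = r4 • v := fun v => (algebraMap_smul C _ v).symm
  simp only [map_neg, hsmV, map_smul, map_sub, map_add, hvlift, hvxi, hvJxi, zero_add] at h1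
  have key : (dbar act Db abar X Y Z + r4 * (cbar X (Bbar Y Z) - cbar Y (Bbar X Z))) • xi
      + (-(dbar act Db (fun X Y => abar X (Jb Y)) X Y Z)
        + r4 * (cbar X (Jb (Bbar Y Z)) - cbar Y (Jb (Bbar X Z)))) • Jxi = 0 := by
    linear_combination (norm := module) -h1
  obtain ⟨ha, hb⟩ := hindep _ _ key
  rw [Algebra.smul_def]
  linear_combination ha


end
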